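/- arXiv:1901.03000 — 2 statements merged into one kernel-verified Lean document; each statement's English description precedes it below -/
import Mathlib

section
/- Let s be a selected node distribution with s_0 = 0 and let π*(s) be its vertical order. Then MC(π*(s)) ≤ MC(π) for every cluster order π ∈ Π(s); that is, among all cluster orders with the given selected node distribution, the vertical order (the output of Algorithm 1) minimizes the min-cut. -/
/-- Relative location `h_π(i) = #{1 ≤ j ≤ i : π j = π i}`. -/
def relLoc (π : ℕ → ℕ) (i : ℕ) : ℕ :=
  ((Finset.Icc 1 i).filter (fun j => π j = π i)).card

/-- Intra-cluster coefficient `a_i(π) = d_I + 1 − h_π(i)` (truncated subtraction). -/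
def aCoef (dI : ℕ) (π : ℕ → ℕ) (i : ℕ) : ℕ :=
  dI + 1 - relLoc π i

/-- Cross-cluster coefficient `b_i(π) = max(0, d_C − (i − h_π(i)))` (truncated subtraction). -/
def bCoef (dC : ℕ) (π : ℕ → ℕ) (i : ℕ) : ℕ :=
  dC - (i - relLoc π i)

/-- Part incoming weight `w_i(π)`: for a separate position (`π i = 0`) it is
`(d_I + d_C + 1 − i)·β_C`, otherwise `a_i(π)·β_I + b_i(π)·β_C`. -/
noncomputable def weight (dI dC : ℕ) (βI βC : ℝ) (π : ℕ → ℕ) (i : ℕ) : ℝ :=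
  if π i = 0 then ((dI + dC + 1 - i : ℕ) : ℝ) * βC
  else (aCoef dI π i : ℝ) * βI + (bCoef dC π i : ℝ) * βC

/-- Min-cut `MC(π) = Σ_{i=1}^k min(α, w_i(π))`. -/
noncomputable def MC (k dI dC : ℕ) (βI βC α : ℝ) (π : ℕ → ℕ) : ℝ :=
  ∑ i ∈ Finset.Icc 1 k, min α (weight dI dC βI βC π i)

/-- A cluster order: a `k`-tuple with entries in `{0, 1, …, L}`. -/
def IsClusterOrder (L k : ℕ) (π : ℕ → ℕ) : Prop :=
  ∀ i, 1 ≤ i → i ≤ k → π i ≤ L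

/-- A selected node distribution `(s_0, s_1, …, s_L)`:
`R ≥ s_1 ≥ s_2 ≥ … ≥ s_L` and `s_0 + s_1 + … + s_L = k`. -/
def IsDist (L R k : ℕ) (s : ℕ → ℕ) : Prop :=
  (∀ i, 1 ≤ i → i + 1 ≤ L → s (i + 1) ≤ s i) ∧
  (∀ i, 1 ≤ i → i ≤ L → s i ≤ R) ∧
  ∑ i ∈ Finset.range (L + 1), s i = k

/-- `π ∈ Π(s)`: `π` is a cluster order with `#{1 ≤ j ≤ k : π j = c} = s c` for all `0 ≤ c ≤ L`. -/
def MemPi (L k : ℕ) (s : ℕ → ℕ) (π : ℕ → ℕ) : Prop :=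
  IsClusterOrder L k π ∧
  ∀ c, c ≤ L → ((Finset.Icc 1 k).filter (fun j => π j = c)).card = s c

/-- Vertical order of distribution `s` (possibly with separate entries, whose positions are
not constrained here):  over the cluster positions (`π i ≠ 0`) in increasing order, relative
locations are nondecreasing, with ties broken by increasing cluster index. -/
def IsVerticalOrder (L k : ℕ) (s : ℕ → ℕ) (π : ℕ → ℕ) : Prop :=
  MemPi L k s π ∧
  ∀ i j, 1 ≤ i → i < j → j ≤ k → π i ≠ 0 → π j ≠ 0 →
    relLoc π i ≤ relLoc π j ∧ (relLoc π i = relLoc π j → π i < π j)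

/-- The distribution `s*` (no separate node): `s*_0 = 0`, `s*_i = R` for `1 ≤ i ≤ ⌊k/R⌋`,
`s*_{⌊k/R⌋+1} = k − ⌊k/R⌋·R`, and `0` beyond. -/
def sStar0 (R k : ℕ) : ℕ → ℕ := fun i =>
  if i = 0 then 0
  else if i ≤ k / R then R
  else if i = k / R + 1 then k - k / R * R
  else 0

/-- The distribution with one separate node: `s_0 = 1`, `s_i = R` for `1 ≤ i ≤ ⌊(k−1)/R⌋`,
`s_{⌊(k−1)/R⌋+1} = (k−1) − ⌊(k−1)/R⌋·R`, and `0` beyond. -/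
def sStar1 (R k : ℕ) : ℕ → ℕ := fun i =>
  if i = 0 then 1
  else if i ≤ (k - 1) / R then R
  else if i = (k - 1) / R + 1 then (k - 1) - (k - 1) / R * R
  else 0

/-- `π^(j)`: the cluster order with exactly one separate entry, located at position `j`,
whose cluster entries form the vertical order of the distribution `sStar1 R k`. -/
def IsPiJ (L R k j : ℕ) (π : ℕ → ℕ) : Prop :=
  π j = 0 ∧ IsVerticalOrder L k (sStar1 R k) π

/-!
At a cluster position `i` with relative location `t` the min-cut term is
`cutTerm i t = min α ((d_I + 1 - t) β_I + (d_C - (i - t)) β_C)`. Telescoping in `t` splits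
`MC(π)` into a part independent of `π` plus, for every layer `v ≤ d_I`, the sum of the
increments `D_v i = cutTerm i v - cutTerm i (v + 1)` over the positions with `h_π(i) ≤ v`.
That layer has `Σ_c min(v, s_c)` elements for every `π ∈ Π(s)` and always contains `1, …, v`;
for the vertical order it is an initial segment of positions. Since `β_C ≤ β_I` and `min α` is
concave, `D_v` is nondecreasing in `i` beyond `v`, so the initial segment has the smallest sum.
-/

open Finset

lemma sum_Ico_le_sum_of_monotoneOn {M : Type*} [AddCommMonoid M] [PartialOrder M]
    [IsOrderedAddMonoid M] {D : ℕ → M} {a k : ℕ} (hD : MonotoneOn D (Set.Icc a k))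
    {B : Finset ℕ} (hB : B ⊆ Icc a k) :
    ∑ i ∈ Ico a (a + #B), D i ≤ ∑ i ∈ B, D i := by
  induction B using Finset.induction_on_max with
  | empty => simp
  | insert b B hlt ih =>
    have hbB : b ∉ B := fun h => lt_irrefl b (hlt b h)
    have hb : b ∈ Icc a k := hB (mem_insert_self b B)
    have hcard : #B ≤ b - a := by
      simpa using card_le_card (fun x hx => mem_Ico.2 ⟨(mem_Icc.1 (hB (mem_insert_of_mem hx))).1,
        hlt x hx⟩ : B ⊆ Ico a b)
    rw [card_insert_of_notMem hbB, ← add_assoc, sum_Ico_succ_top (by omega), sum_insert hbB,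
      add_comm (D b)]
    rw [mem_Icc] at hb
    refine add_le_add (ih ((subset_insert b B).trans hB)) (hD ?_ hb (by omega))
    simp only [Set.mem_Icc]; omega

lemma min_sub_min_le_min_sub_min {c a₁ a₂ b₁ b₂ : ℝ} (ha : a₂ ≤ a₁) (hb : b₂ ≤ b₁)
    (h₂ : b₂ ≤ a₂) (hdiff : a₁ - a₂ ≤ b₁ - b₂) : min c a₁ - min c a₂ ≤ min c b₁ - min c b₂ := by
  simp only [min_def]
  split_ifs <;> linarith

lemma eq_add_sum_Ico_sub_succ (G : ℕ → ℝ) {a b : ℕ} (h : a ≤ b) :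
    G a = G b + ∑ v ∈ Ico a b, (G v - G (v + 1)) := by
  have hneg : ∑ v ∈ Ico a b, (G v - G (v + 1)) = -∑ v ∈ Ico a b, (G (v + 1) - G v) := by
    rw [← sum_neg_distrib]; simp
  linarith [Finset.sum_Ico_sub G h]

lemma sum_apply_eq_sum_add_sum_filter_le (G : ℕ → ℕ → ℝ) (h : ℕ → ℕ) (S : Finset ℕ) {n : ℕ}
    (hh : ∀ i ∈ S, 1 ≤ h i ∧ h i ≤ n) :
    ∑ i ∈ S, G i (h i) =
      ∑ i ∈ S, G i n + ∑ v ∈ Ico 1 n, ∑ i ∈ S with h i ≤ v, (G i v - G i (v + 1)) := by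
  have hlayer : ∀ i ∈ S, G i (h i) =
      G i n + ∑ v ∈ Ico 1 n, if h i ≤ v then G i v - G i (v + 1) else 0 := by
    intro i hi
    obtain ⟨h1, hn⟩ := hh i hi
    rw [eq_add_sum_Ico_sub_succ (G i) hn, ← sum_filter]
    congr 2
    ext v
    simp only [mem_Ico, mem_filter]
    omega
  rw [sum_congr rfl hlayer, sum_add_distrib, sum_comm]
  simp only [sum_filter]

lemma sum_Icc_card_le_sum {D : ℕ → ℝ} {m k : ℕ} (hD : MonotoneOn D (Set.Icc (m + 1) k))
    {B : Finset ℕ} (hB : B ⊆ Icc 1 k) (hm : Icc 1 m ⊆ B) :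
    ∑ i ∈ Icc 1 #B, D i ≤ ∑ i ∈ B, D i := by
  have hmB : m ≤ #B := by simpa using card_le_card hm
  have hrest : B \ Icc 1 m ⊆ Icc (m + 1) k := by
    intro x hx
    have := mem_Icc.1 (hB (mem_sdiff.1 hx).1)
    simp only [mem_sdiff, mem_Icc] at hx ⊢
    omega
  have hsplit : Icc 1 #B = Icc 1 m ∪ Ico (m + 1) (m + 1 + #(B \ Icc 1 m)) := by
    ext x
    simp only [card_sdiff_of_subset hm, Nat.card_Icc, mem_union, mem_Icc, mem_Ico]
    omega
  have hdisj : Disjoint (Icc 1 m) (Ico (m + 1) (m + 1 + #(B \ Icc 1 m))) := by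
    rw [disjoint_left]
    intro x hx hx'
    simp only [mem_Icc, mem_Ico] at hx hx'
    omega
  calc ∑ i ∈ Icc 1 #B, D i
      = ∑ i ∈ Ico (m + 1) (m + 1 + #(B \ Icc 1 m)), D i + ∑ i ∈ Icc 1 m, D i := by
        rw [hsplit, sum_union hdisj, add_comm]
    _ ≤ ∑ i ∈ B \ Icc 1 m, D i + ∑ i ∈ Icc 1 m, D i :=
        add_le_add_left (sum_Ico_le_sum_of_monotoneOn hD hrest) _
    _ = ∑ i ∈ B, D i := sum_sdiff hm

lemma eq_Icc_one_card_of_downClosed {A : Finset ℕ} (hA1 : ∀ x ∈ A, 1 ≤ x)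
    (hA : ∀ i j, 1 ≤ i → i ≤ j → j ∈ A → i ∈ A) : A = Icc 1 #A := by
  refine (eq_of_subset_of_card_le (fun j hj => ?_) (by simp)).symm
  rw [mem_Icc] at hj
  by_contra hjA
  have hsub : A ⊆ Ico 1 j := fun x hx =>
    mem_Ico.2 ⟨hA1 x hx, lt_of_not_ge fun hjx => hjA (hA j x hj.1 hjx hx)⟩
  have := card_le_card hsub
  simp only [Nat.card_Ico] at this
  omega

section relLoc

variable (π : ℕ → ℕ) {i j : ℕ}

lemma relLoc_pos (hi : 1 ≤ i) : 1 ≤ relLoc π i :=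
  card_pos.2 ⟨i, by simp [hi]⟩

lemma relLoc_le_self : relLoc π i ≤ i := by
  simpa [relLoc] using card_filter_le (Icc 1 i) (fun j => π j = π i)

lemma relLoc_lt_relLoc (hi : 1 ≤ i) (hij : i < j) (h : π i = π j) :
    relLoc π i < relLoc π j := by
  unfold relLoc
  rw [h]
  refine card_lt_card ⟨fun x hx => ?_, fun hsub => ?_⟩
  · simp only [mem_filter, mem_Icc] at hx ⊢
    exact ⟨⟨hx.1.1, by omega⟩, hx.2⟩
  · have := hsub (show j ∈ {x ∈ Icc 1 j | π x = π j} by simp; omega)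
    simp only [mem_filter, mem_Icc] at this
    omega

lemma relLoc_le_card_fiber {k : ℕ} (hik : i ≤ k) :
    relLoc π i ≤ #{j ∈ Icc 1 k | π j = π i} :=
  card_le_card (filter_subset_filter _ (Icc_subset_Icc_right hik))

/-- Within one cluster, `relLoc` enumerates the positions as `1, 2, …`. -/
lemma card_filter_fiber_relLoc_le (k c v : ℕ) :
    #{i ∈ {j ∈ Icc 1 k | π j = c} | relLoc π i ≤ v} = min v #{j ∈ Icc 1 k | π j = c} := by
  set T := {j ∈ Icc 1 k | π j = c}
  have hT : ∀ i ∈ T, 1 ≤ i ∧ i ≤ k ∧ π i = c := fun i hi => by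
    simp only [T, mem_filter, mem_Icc] at hi; exact ⟨hi.1.1, hi.1.2, hi.2⟩
  have hinj : Set.InjOn (relLoc π) T := by
    intro x hx y hy hxy
    obtain ⟨hx1, -, hxc⟩ := hT x hx
    obtain ⟨hy1, -, hyc⟩ := hT y hy
    by_contra hne
    rcases Nat.lt_or_gt_of_ne hne with h | h
    · exact (relLoc_lt_relLoc π hx1 h (hxc.trans hyc.symm)).ne hxy
    · exact (relLoc_lt_relLoc π hy1 h (hyc.trans hxc.symm)).ne hxy.symm
  have himage : T.image (relLoc π) = Icc 1 #T := by
    refine eq_of_subset_of_card_le (fun t ht => ?_) (by rw [card_image_of_injOn hinj]; simp)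
    obtain ⟨i, hi, rfl⟩ := mem_image.1 ht
    obtain ⟨hi1, hik, hic⟩ := hT i hi
    exact mem_Icc.2 ⟨relLoc_pos π hi1, by simpa [T, hic] using relLoc_le_card_fiber π hik⟩
  rw [← card_image_of_injOn (hinj.mono (filter_subset _ T)), ← filter_image (p := (· ≤ v)),
    himage]
  have : {x ∈ Icc 1 #T | x ≤ v} = Icc 1 (min v #T) := by ext; simp; omega
  simp [this]

lemma card_filter_relLoc_le {L k : ℕ} (hπ : IsClusterOrder L k π) (v : ℕ) :
    #{i ∈ Icc 1 k | relLoc π i ≤ v} = ∑ c ∈ range (L + 1), min v #{j ∈ Icc 1 k | π j = c} := by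
  rw [card_eq_sum_card_fiberwise (f := π) (t := range (L + 1)) fun i hi => by
    simp only [coe_filter, Set.mem_ofPred_eq, mem_Icc] at hi
    exact mem_coe.2 (mem_range_succ_iff.2 (hπ i hi.1.1 hi.1.2))]
  refine sum_congr rfl fun c _ => ?_
  rw [← card_filter_fiber_relLoc_le, filter_filter, filter_filter]
  simp only [and_comm]

end relLoc

namespace MemPi

variable {L k : ℕ} {s π : ℕ → ℕ}

lemma card_filter_relLoc_le (hπ : MemPi L k s π) (v : ℕ) :
    #{i ∈ Icc 1 k | relLoc π i ≤ v} = ∑ c ∈ range (L + 1), min v (s c) := by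
  rw [_root_.card_filter_relLoc_le π hπ.1]
  exact sum_congr rfl fun c hc => by rw [hπ.2 c (mem_range_succ_iff.1 hc)]

lemma ne_zero (hπ : MemPi L k s π) (hs0 : s 0 = 0) : ∀ i ∈ Icc 1 k, π i ≠ 0 := by
  intro i hi h
  have := hπ.2 0 (Nat.zero_le L)
  rw [hs0, card_eq_zero, filter_eq_empty_iff] at this
  exact this hi h

lemma relLoc_le {i : ℕ} (hπ : MemPi L k s π) (hi : i ∈ Icc 1 k) : relLoc π i ≤ s (π i) := by
  rw [← hπ.2 _ (hπ.1 i (mem_Icc.1 hi).1 (mem_Icc.1 hi).2)]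
  exact relLoc_le_card_fiber π (mem_Icc.1 hi).2

lemma relLoc_le_of_isDist {R i : ℕ} (hπ : MemPi L k s π) (hs : IsDist L R k s)
    (h0 : ∀ i ∈ Icc 1 k, π i ≠ 0) (hi : i ∈ Icc 1 k) : relLoc π i ≤ R :=
  (hπ.relLoc_le hi).trans <| hs.2.1 _ (Nat.one_le_iff_ne_zero.2 (h0 i hi))
    (hπ.1 i (mem_Icc.1 hi).1 (mem_Icc.1 hi).2)

end MemPi

lemma IsVerticalOrder.filter_relLoc_le_eq_Icc {L k : ℕ} {s π : ℕ → ℕ}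
    (hπ : IsVerticalOrder L k s π) (h0 : ∀ i ∈ Icc 1 k, π i ≠ 0) (v : ℕ) :
    {i ∈ Icc 1 k | relLoc π i ≤ v} = Icc 1 #{i ∈ Icc 1 k | relLoc π i ≤ v} := by
  refine eq_Icc_one_card_of_downClosed (fun x hx => (mem_Icc.1 (mem_filter.1 hx).1).1) ?_
  intro i j hi hij hj
  simp only [mem_filter, mem_Icc] at hj ⊢
  refine ⟨⟨hi, hij.trans hj.1.2⟩, le_trans ?_ hj.2⟩
  rcases hij.eq_or_lt with rfl | hlt
  · rfl
  · exact (hπ.2 i j hi hlt hj.1.2 (h0 i (mem_Icc.2 ⟨hi, by omega⟩)) (h0 j (mem_Icc.2 hj.1))).1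

lemma IsVerticalOrder.sum_filter_relLoc_le_le {L k : ℕ} {s πstar π : ℕ → ℕ}
    (hstar : IsVerticalOrder L k s πstar) (h0 : ∀ i ∈ Icc 1 k, πstar i ≠ 0)
    (hπ : MemPi L k s π) {v : ℕ} {D : ℕ → ℝ} (hD : MonotoneOn D (Set.Ici (v + 1))) :
    ∑ i ∈ Icc 1 k with relLoc πstar i ≤ v, D i ≤ ∑ i ∈ Icc 1 k with relLoc π i ≤ v, D i := by
  rw [hstar.filter_relLoc_le_eq_Icc h0, hstar.1.card_filter_relLoc_le,
    ← hπ.card_filter_relLoc_le]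
  refine sum_Icc_card_le_sum (m := min v k) (hD.mono fun x hx => ?_) (filter_subset _ _)
    fun i hi => ?_
  · simp only [Set.mem_Icc, Set.mem_Ici] at hx ⊢; omega
  · simp only [mem_Icc, mem_filter] at hi ⊢
    exact ⟨⟨hi.1, by omega⟩, (relLoc_le_self π).trans (by omega)⟩

/-- `min α (w_i(π))` at a cluster position `i` with relative location `t`. -/
noncomputable def cutTerm (dI dC : ℕ) (βI βC α : ℝ) (i t : ℕ) : ℝ :=
  min α (((dI + 1 - t : ℕ) : ℝ) * βI + ((dC - (i - t) : ℕ) : ℝ) * βC)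

lemma MC_eq_sum_cutTerm {k dI dC : ℕ} {βI βC α : ℝ} {π : ℕ → ℕ}
    (h0 : ∀ i ∈ Icc 1 k, π i ≠ 0) :
    MC k dI dC βI βC α π = ∑ i ∈ Icc 1 k, cutTerm dI dC βI βC α i (relLoc π i) :=
  sum_congr rfl fun i hi => by simp only [cutTerm, weight, aCoef, bCoef, if_neg (h0 i hi)]

lemma monotoneOn_cutTerm_sub_cutTerm_succ (dC : ℕ) {dI v : ℕ} {βI βC : ℝ} (α : ℝ)
    (hβ : βC ≤ βI) (hβC : 0 < βC) (hv : v ≤ dI) :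
    MonotoneOn (fun i => cutTerm dI dC βI βC α i v - cutTerm dI dC βI βC α i (v + 1))
      (Set.Ici (v + 1)) := by
  intro i hi j hj hij
  simp only [Set.mem_Ici] at hi hj
  simp only [cutTerm]
  have hA : ((dI + 1 - v : ℕ) : ℝ) = ((dI + 1 - (v + 1) : ℕ) : ℝ) + 1 := by
    exact_mod_cast (by omega : dI + 1 - v = dI + 1 - (v + 1) + 1)
  have hi₁ : ((dC - (i - (v + 1)) : ℕ) : ℝ) ≤ ((dC - (i - v) : ℕ) : ℝ) + 1 := by
    exact_mod_cast (by omega : dC - (i - (v + 1)) ≤ dC - (i - v) + 1)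
  have hj₁ : ((dC - (j - (v + 1)) : ℕ) : ℝ) ≤ ((dC - (j - v) : ℕ) : ℝ) + 1 := by
    exact_mod_cast (by omega : dC - (j - (v + 1)) ≤ dC - (j - v) + 1)
  have hji : ((dC - (j - (v + 1)) : ℕ) : ℝ) ≤ ((dC - (i - (v + 1)) : ℕ) : ℝ) := by
    exact_mod_cast (by omega : dC - (j - (v + 1)) ≤ dC - (i - (v + 1)))
  have hdiff : ((dC - (i - v) : ℕ) : ℝ) + ((dC - (j - (v + 1)) : ℕ) : ℝ)
      ≤ ((dC - (i - (v + 1)) : ℕ) : ℝ) + ((dC - (j - v) : ℕ) : ℝ) := by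
    exact_mod_cast (by omega : dC - (i - v) + (dC - (j - (v + 1)))
      ≤ dC - (i - (v + 1)) + (dC - (j - v)))
  rw [hA]
  apply min_sub_min_le_min_sub_min <;> nlinarith

theorem stmt2_general (L R k dI dC : ℕ) (βI βC α : ℝ)
    (hR : 2 ≤ R)
    (hdI : dI = R - 1)
    (hβ : βC ≤ βI) (hβC : 0 < βC)
    (s : ℕ → ℕ) (hs : IsDist L R k s) (hs0 : s 0 = 0)
    (πstar : ℕ → ℕ) (hstar : IsVerticalOrder L k s πstar)
    (π : ℕ → ℕ) (hπ : MemPi L k s π) :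
    MC k dI dC βI βC α πstar ≤ MC k dI dC βI βC α π := by
  have hrel : ∀ ρ, MemPi L k s ρ → ∀ i ∈ Icc 1 k, 1 ≤ relLoc ρ i ∧ relLoc ρ i ≤ dI + 1 :=
    fun ρ hρ i hi => ⟨relLoc_pos ρ (mem_Icc.1 hi).1,
      (hρ.relLoc_le_of_isDist hs (hρ.ne_zero hs0) hi).trans (by omega)⟩
  rw [MC_eq_sum_cutTerm (hstar.1.ne_zero hs0), MC_eq_sum_cutTerm (hπ.ne_zero hs0),
    sum_apply_eq_sum_add_sum_filter_le _ _ _ (hrel πstar hstar.1),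
    sum_apply_eq_sum_add_sum_filter_le _ _ _ (hrel π hπ)]
  gcongr 2 with v hv
  exact hstar.sum_filter_relLoc_le_le (hstar.1.ne_zero hs0) hπ
    (monotoneOn_cutTerm_sub_cutTerm_succ dC α hβ hβC (by rw [mem_Ico] at hv; omega))

/-- for a fixed distribution `s` with `s_0 = 0`, the vertical order minimizes
the min-cut among all cluster orders in `Π(s)`. -/
theorem stmt2 (L R k dI dC : ℕ) (βI βC α : ℝ)
    (hL : 1 ≤ L) (hR : 2 ≤ R) (hk : 2 ≤ k)
    (hdI : dI = R - 1) (hdC : 1 ≤ dC) (hkd : k ≤ dI + dC)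
    (hβ : βC ≤ βI) (hβC : 0 < βC) (hα : 0 < α)
    (s : ℕ → ℕ) (hs : IsDist L R k s) (hs0 : s 0 = 0)
    (πstar : ℕ → ℕ) (hstar : IsVerticalOrder L k s πstar)
    (π : ℕ → ℕ) (hπ : MemPi L k s π) :
    MC k dI dC βI βC α πstar ≤ MC k dI dC βI βC α π :=
  stmt2_general L R k dI dC βI βC α hR hdI hβ hβC s hs hs0 πstar hstar π hπ
end

section
/- Assume k − 1 ≤ LR and fix 1 ≤ j ≤ k. Then for every position i ≠ j (so that π^(j)_i ≥ 1) one has a_i(π^(j)) + b_i(π^(j)) = d_I + d_C + 1 − i; equivalently, i − h_{π^(j)}(i) ≤ d_C for every cluster position i of π^(j). -/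
lemma relLoc_le' (π : ℕ → ℕ) (i : ℕ) : relLoc π i ≤ i := by
  unfold relLoc
  calc ((Finset.Icc 1 i).filter (fun j => π j = π i)).card
      ≤ (Finset.Icc 1 i).card := Finset.card_filter_le _ _
    _ = i := by simp

lemma one_le_relLoc' (π : ℕ → ℕ) (i : ℕ) (hi : 1 ≤ i) : 1 ≤ relLoc π i := by
  unfold relLoc
  refine Finset.card_pos.mpr ⟨i, ?_⟩
  simp [Finset.mem_filter, Finset.mem_Icc, hi]

lemma relLoc_lt_relLoc' (π : ℕ → ℕ) (p q : ℕ) (hp : 1 ≤ p) (hpq : p < q)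
    (hc : π p = π q) : relLoc π p < relLoc π q := by
  unfold relLoc
  apply Finset.card_lt_card
  rw [hc]
  refine (Finset.ssubset_iff_of_subset
    (Finset.filter_subset_filter _ (Finset.Icc_subset_Icc_right hpq.le))).mpr ?_
  refine ⟨q, ?_, ?_⟩
  · simp only [Finset.mem_filter, Finset.mem_Icc, le_refl, and_true, true_and]
    omega
  · simp only [Finset.mem_filter, Finset.mem_Icc]
    intro hmem
    omega

lemma cluster_count' (π : ℕ → ℕ) (k c s h : ℕ)
    (hcard : ((Finset.Icc 1 k).filter (fun p => π p = c)).card = s) :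
    s - h ≤ ((Finset.Icc 1 k).filter (fun p => π p = c ∧ h < relLoc π p)).card := by
  classical
  set T := (Finset.Icc 1 k).filter (fun p => π p = c) with hT
  have hmono : ∀ p ∈ T, ∀ q ∈ T, p < q → relLoc π p < relLoc π q := by
    intro p hp q hq hpq
    simp only [hT, Finset.mem_filter, Finset.mem_Icc] at hp hq
    exact relLoc_lt_relLoc' π p q hp.1.1 hpq (by rw [hp.2, hq.2])
  have hinj : Set.InjOn (relLoc π) T := by
    intro p hp q hq hpq
    rcases lt_trichotomy p q with h1 | h1 | h1
    · exact absurd hpq (Nat.ne_of_lt (hmono p hp q hq h1))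
    · exact h1
    · exact absurd hpq.symm (Nat.ne_of_lt (hmono q hq p hp h1))
  have hmaps : ∀ p ∈ T, relLoc π p ∈ Finset.Icc 1 s := by
    intro p hp
    simp only [hT, Finset.mem_filter, Finset.mem_Icc] at hp
    refine Finset.mem_Icc.mpr ⟨one_le_relLoc' π p hp.1.1, ?_⟩
    rw [← hcard]
    unfold relLoc
    apply Finset.card_le_card
    intro q hq
    simp only [hT, Finset.mem_filter, Finset.mem_Icc] at hq ⊢
    exact ⟨⟨hq.1.1, le_trans hq.1.2 hp.1.2⟩, by rw [hq.2, hp.2]⟩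
  have himg : T.image (relLoc π) = Finset.Icc 1 s := by
    apply Finset.eq_of_subset_of_card_le
    · intro v hv
      obtain ⟨p, hp, rfl⟩ := Finset.mem_image.mp hv
      exact hmaps p hp
    · rw [Finset.card_image_of_injOn hinj, hcard, Nat.card_Icc]
      omega
  have hset : (Finset.Icc 1 k).filter (fun p => π p = c ∧ h < relLoc π p)
      = T.filter (fun p => h < relLoc π p) := by
    rw [hT, Finset.filter_filter]
  rw [hset]
  have h2 : (T.filter (fun p => h < relLoc π p)).card
      = ((Finset.Icc 1 s).filter (fun v => h < v)).card := by
    rw [← himg, Finset.filter_image,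
      Finset.card_image_of_injOn (hinj.mono (Finset.coe_subset.mpr (Finset.filter_subset _ T)))]
  rw [h2]
  have h3 : (Finset.Icc 1 s).filter (fun v => h < v) = Finset.Icc (h + 1) s := by
    ext v
    simp only [Finset.mem_filter, Finset.mem_Icc]
    omega
  rw [h3, Nat.card_Icc]
  omega

lemma sStar1_le_R' (R k : ℕ) (hR : 1 ≤ R) (c : ℕ) : sStar1 R k c ≤ R := by
  unfold sStar1
  have h1 : k - 1 - (k - 1) / R * R = (k - 1) % R := by
    rw [mul_comm]
    exact Nat.sub_eq_of_eq_add (Nat.mod_add_div (k - 1) R).symm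
  have h2 : (k - 1) % R < R := Nat.mod_lt _ hR
  split_ifs
  · exact hR
  · exact le_rfl
  · rw [h1]; exact h2.le
  · exact Nat.zero_le R

/-- for `π^(j)` and every cluster position `i ≠ j`,
`a_i + b_i = d_I + d_C + 1 − i`; equivalently `i − h(i) ≤ d_C`. -/
theorem stmt5 (L R k dI dC : ℕ)
    (hL : 1 ≤ L) (hR : 2 ≤ R) (hk : 2 ≤ k)
    (hdI : dI = R - 1) (hdC : 1 ≤ dC) (hkd : k ≤ dI + dC)
    (hk1LR : k - 1 ≤ L * R)
    (j : ℕ) (hj1 : 1 ≤ j) (hjk : j ≤ k)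
    (π : ℕ → ℕ) (hπ : IsPiJ L R k j π) :
    ∀ i, 1 ≤ i → i ≤ k → i ≠ j →
      aCoef dI π i + bCoef dC π i = dI + dC + 1 - i ∧ i - relLoc π i ≤ dC := by
  classical
  obtain ⟨hπj, ⟨⟨hCO, hcount⟩, hvert⟩⟩ := hπ
  intro i hi1 hik hij
  -- π i ≠ 0
  have hπi0 : π i ≠ 0 := by
    intro h0
    have hc0 := hcount 0 (Nat.zero_le L)
    have hs0 : sStar1 R k 0 = 1 := rfl
    have h2 : 1 < ((Finset.Icc 1 k).filter (fun p => π p = 0)).card := by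
      refine Finset.one_lt_card.mpr ⟨i, ?_, j, ?_, hij⟩
      · simp only [Finset.mem_filter, Finset.mem_Icc]; exact ⟨⟨hi1, hik⟩, h0⟩
      · simp only [Finset.mem_filter, Finset.mem_Icc]; exact ⟨⟨hj1, hjk⟩, hπj⟩
    omega
  set h := relLoc π i with hh
  have hh1 : 1 ≤ h := one_le_relLoc' π i hi1
  have hhi : h ≤ i := relLoc_le' π i
  -- h ≤ R
  have hhR : h ≤ R := by
    have hcL : π i ≤ L := hCO i hi1 hik
    have h1 : h ≤ ((Finset.Icc 1 k).filter (fun p => π p = π i)).card := by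
      rw [hh]
      unfold relLoc
      apply Finset.card_le_card
      intro q hq
      simp only [Finset.mem_filter, Finset.mem_Icc] at hq ⊢
      exact ⟨⟨hq.1.1, le_trans hq.1.2 hik⟩, hq.2⟩
    rw [hcount (π i) hcL] at h1
    exact h1.trans (sStar1_le_R' R k (by omega) (π i))
  -- key counting bound
  have key : sStar1 R k 1 - h ≤ k - i := by
    have hsub : (Finset.Icc 1 k).filter (fun p => π p = 1 ∧ h < relLoc π p)
        ⊆ Finset.Icc (i + 1) k := by
      intro p hp
      simp only [Finset.mem_filter, Finset.mem_Icc] at hp ⊢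
      obtain ⟨⟨hp1, hpk⟩, hpc, hph⟩ := hp
      refine ⟨?_, hpk⟩
      by_contra hcon
      push_neg at hcon
      rcases Nat.lt_or_ge p i with hlt | hge
      · have := (hvert p i hp1 hlt hik (by omega) hπi0).1
        omega
      · have : p = i := by omega
        subst this
        omega
    calc sStar1 R k 1 - h
        ≤ ((Finset.Icc 1 k).filter (fun p => π p = 1 ∧ h < relLoc π p)).card :=
          cluster_count' π k 1 (sStar1 R k 1) h (hcount 1 hL)
      _ ≤ (Finset.Icc (i + 1) k).card := Finset.card_le_card hsub
      _ = k - i := by rw [Nat.card_Icc]; omega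
  -- value of sStar1 R k 1
  have hs1 : sStar1 R k 1 = R ∨ (sStar1 R k 1 = k - 1 ∧ k - 1 < R) := by
    unfold sStar1
    by_cases hd : 1 ≤ (k - 1) / R
    · left; simp [hd]
    · right
      have hd0 : (k - 1) / R = 0 := Nat.lt_one_iff.mp (Nat.not_le.mp hd)
      have hlt : k - 1 < R := by
        by_contra hcon
        push_neg at hcon
        have := Nat.div_le_div_right (c := R) hcon
        rw [Nat.div_self (by omega)] at this
        omega
      simp [hd0]
      omega
  have hgoal : dI + 1 - h + (dC - (i - h)) = dI + dC + 1 - i ∧ i - h ≤ dC := by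
    rcases hs1 with h' | ⟨h', h''⟩ <;> rw [h'] at key <;> omega
  exact hgoal
end
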